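/- arXiv:1011.4710 — 5 statements merged into one kernel-verified Lean document; each statement's English description precedes it below -/
import Mathlib

section
/- Let n, k ≥ 1. Let γ = (γ₁,…,γₙ) and δ = (δ₁,…,δₙ) be regular k-jets of curves in ℂⁿ. For 1 ≤ i ≤ k let S_γ^i denote the set of those P in the ℂ-vector space V of polynomials in ℂ[x₁,…,xₙ] of total degree at most k with zero constant term such that P(γ₁(t),…,γₙ(t)) ≡ 0 modulo t^{i+1}, and similarly S_δ^i. Then S_γ^i = S_δ^i for all i = 1,…,k if and only if there exists a polynomial φ ∈ ℂ[t] with φ(0) = 0 and nonzero coefficient of t such that δ_j(t) ≡ γ_j(φ(t)) modulo t^{k+1} for every j = 1,…,n. (In other words, the map sending a regular k-jet γ to the flag of solution spaces S_γ^1 ⊇ S_γ^2 ⊇ … ⊇ S_γ^k is invariant under the reparametrisation group 𝔾_k of k-jets of biholomorphic germs (ℂ,0) → (ℂ,0) and is injective on 𝔾_k-orbits.) -/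
/-!
A reparametrisation `φ` with `φ(0) = 0` and `φ'(0)` invertible has an inverse modulo `t ^ (k + 1)`
(built by Newton steps), so composing with `φ` preserves the `t`-adic order of `P(γ(t))` up to
`k + 1`: the flag of `γ` is invariant.

Conversely, pick `j₀` with `γ_{j₀}` regular and let `φ` invert `γ_{j₀}` modulo `t ^ (k + 1)`, so
that `γ' := γ ∘ φ` has the flag of `γ` and `γ'_{j₀} ≡ t`. With `r_j` the `k`-jet of `γ'_j`, the jet
`x_j - r_j(x_{j₀})` kills `γ'` to order `k`, hence kills `δ` too:
`δ_j ≡ γ'_j(δ_{j₀}) = γ_j(φ(δ_{j₀}))`. Comparing the first members of the flags on `x_{j₀}`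
shows that `δ_{j₀}` is regular, so `φ ∘ δ_{j₀}` is a reparametrisation.
-/

open Polynomial

namespace Polynomial

variable {R : Type*} [CommRing R]

theorem X_pow_dvd_comp {p q : R[X]} {m : ℕ} (hq : q.coeff 0 = 0) (hp : X ^ m ∣ p) :
    X ^ m ∣ p.comp q := by
  obtain ⟨r, rfl⟩ := hp
  rw [mul_comp, pow_comp, X_comp]
  exact (pow_dvd_pow_of_dvd (X_dvd_iff.mpr hq) m).mul_right _

theorem coeff_zero_comp_eq_zero {p q : R[X]} (hp : p.coeff 0 = 0) (hq : q.coeff 0 = 0) :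
    (p.comp q).coeff 0 = 0 := by
  simpa [X_dvd_iff] using X_pow_dvd_comp (m := 1) hq (by simpa [X_dvd_iff] using hp)

theorem dvd_comp_sub_comp (p : R[X]) {a b d : R[X]} (h : d ∣ a - b) :
    d ∣ p.comp a - p.comp b := by
  refine h.trans ?_
  simpa [comp, eval_map] using sub_dvd_eval_sub a b (p.map C)

theorem coeff_one_eq_eval_zero_derivative (p : R[X]) : p.coeff 1 = (derivative p).eval 0 := by
  simp [← coeff_zero_eq_eval_zero, coeff_derivative]

theorem coeff_one_comp (p : R[X]) {q : R[X]} (hq : q.coeff 0 = 0) :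
    (p.comp q).coeff 1 = p.coeff 1 * q.coeff 1 := by
  rw [coeff_zero_eq_eval_zero] at hq
  simp only [coeff_one_eq_eval_zero_derivative, derivative_comp, eval_mul, eval_comp, hq]
  ring

theorem X_pow_succ_dvd_comp_add_sub (f : R[X]) {φ e : R[X]} {m : ℕ} (hm : 1 ≤ m)
    (hφ : φ.coeff 0 = 0) (he : X ^ m ∣ e) :
    X ^ (m + 1) ∣ f.comp (φ + e) - f.comp φ - C (f.coeff 1) * e := by
  obtain ⟨K, hK⟩ := binomExpansion (f.map C) φ e
  have hlin : X ∣ (derivative f).comp φ - C (f.coeff 1) := by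
    rw [X_dvd_iff, coeff_sub, coeff_C_zero, coeff_zero_eq_eval_zero, eval_comp,
      ← coeff_zero_eq_eval_zero, hφ, coeff_one_eq_eval_zero_derivative, sub_self]
  have hexp : f.comp (φ + e) - f.comp φ - C (f.coeff 1) * e =
      ((derivative f).comp φ - C (f.coeff 1)) * e + K * e ^ 2 := by
    have h1 : f.comp (φ + e) = (f.map C).eval (φ + e) := by rw [eval_map]; rfl
    have h2 : f.comp φ = (f.map C).eval φ := by rw [eval_map]; rfl
    have h3 : (derivative f).comp φ = (derivative (f.map C)).eval φ := by
      rw [derivative_map, eval_map]; rfl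
    rw [h1, h2, h3, hK]
    ring
  have he2 : X ^ (m * 2) ∣ e ^ 2 := by
    rw [pow_mul]; exact pow_dvd_pow_of_dvd he 2
  rw [hexp]
  exact dvd_add (pow_succ' (X : R[X]) m ▸ mul_dvd_mul hlin he)
    (((pow_dvd_pow X (by omega : m + 1 ≤ m * 2)).trans he2).mul_left K)

theorem exists_X_pow_dvd_comp_sub_X {f : R[X]} (h0 : f.coeff 0 = 0) (h1 : IsUnit (f.coeff 1))
    (m : ℕ) : ∃ φ : R[X], φ.coeff 0 = 0 ∧ X ^ (m + 1) ∣ f.comp φ - X := by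
  induction m with
  | zero => exact ⟨X, coeff_X_zero, by simpa [X_dvd_iff] using h0⟩
  | succ m ih =>
    obtain ⟨φ, hφ0, s, hs⟩ := ih
    obtain ⟨u, hu⟩ := h1
    -- Newton step: cancel the lowest-order error term `s(0) X ^ (m + 1)`.
    set e : R[X] := -C (↑u⁻¹ * s.coeff 0) * X ^ (m + 1)
    refine ⟨φ + e, by simp [e, hφ0], ?_⟩
    have hexp := X_pow_succ_dvd_comp_add_sub f (by omega) hφ0
      (dvd_mul_left _ _ : X ^ (m + 1) ∣ e)
    have hs0 : X ^ (m + 2) ∣ X ^ (m + 1) * (s - C (s.coeff 0)) :=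
      pow_succ (X : R[X]) (m + 1) ▸ mul_dvd_mul_left _ (X_dvd_iff.mpr (by simp))
    have hCe : C (f.coeff 1) * e = -(C (s.coeff 0) * X ^ (m + 1)) := by
      simp only [e, ← hu, neg_mul, mul_neg, ← mul_assoc, ← C_mul, Units.mul_inv, one_mul]
    have key : f.comp (φ + e) - X = (f.comp (φ + e) - f.comp φ - C (f.coeff 1) * e) +
        X ^ (m + 1) * (s - C (s.coeff 0)) := by
      linear_combination hs + hCe
    rw [key]
    exact dvd_add hexp hs0

theorem exists_natDegree_le_X_pow_dvd_sub (p : R[X]) (k : ℕ) :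
    ∃ r : R[X], r.natDegree ≤ k ∧ X ^ (k + 1) ∣ p - r := by
  refine ⟨p %ₘ X ^ (k + 1), ?_, ?_⟩
  · nontriviality R
    simpa [Nat.lt_succ_iff] using
      natDegree_modByMonic_lt p (monic_X_pow (k + 1)) fun h => by simpa using congrArg natDegree h
  · rw [modByMonic_eq_sub_mul_div, sub_sub_cancel]
    exact dvd_mul_right _ _

theorem X_pow_dvd_comp_iff {p q : R[X]} {m : ℕ} (hq0 : q.coeff 0 = 0) (hq1 : IsUnit (q.coeff 1)) :
    X ^ m ∣ p.comp q ↔ X ^ m ∣ p := by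
  refine ⟨fun h => ?_, X_pow_dvd_comp hq0⟩
  obtain ⟨χ, hχ0, hχ⟩ := exists_X_pow_dvd_comp_sub_X hq0 hq1 m
  have hp : X ^ m ∣ (p.comp q).comp χ - p := by
    simpa [comp_assoc] using dvd_comp_sub_comp p ((pow_dvd_pow X m.le_succ).trans hχ)
  exact (dvd_iff_dvd_of_dvd_sub hp).mp (X_pow_dvd_comp hχ0 h)

theorem isUnit_coeff_one_of_X_pow_dvd_comp_sub_X {f φ : R[X]} {m : ℕ} (hm : 2 ≤ m)
    (hφ0 : φ.coeff 0 = 0) (h : X ^ m ∣ f.comp φ - X) : IsUnit (φ.coeff 1) := by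
  have h1 := X_pow_dvd_iff.mp h 1 (by omega)
  rw [coeff_sub, coeff_X_one, coeff_one_comp f hφ0, sub_eq_zero] at h1
  exact .of_mul_eq_one_right _ h1

end Polynomial

namespace MvPolynomial

variable {R σ : Type*} [CommRing R]

theorem totalDegree_X_pow_le (j : σ) (i : ℕ) : (X j ^ i : MvPolynomial σ R).totalDegree ≤ i := by
  rw [X_pow_eq_monomial]
  exact (totalDegree_monomial_le _ _).trans (by simp)

theorem totalDegree_X_le (j : σ) : (X j : MvPolynomial σ R).totalDegree ≤ 1 := by
  simpa using totalDegree_X_pow_le (R := R) j 1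

theorem totalDegree_aeval_X_le (p : R[X]) (j : σ) :
    (Polynomial.aeval (X j : MvPolynomial σ R) p).totalDegree ≤ p.natDegree := by
  rw [aeval_eq_sum_range]
  refine (totalDegree_finsetSum _ _).trans (Finset.sup_le fun i hi => ?_)
  refine (totalDegree_smul_le _ _).trans ((totalDegree_X_pow_le j i).trans ?_)
  exact Nat.lt_succ_iff.mp (Finset.mem_range.mp hi)

theorem coeff_zero_aeval_X (p : R[X]) (j : σ) :
    coeff 0 (Polynomial.aeval (X j : MvPolynomial σ R) p) = p.coeff 0 := by
  rw [← constantCoeff_eq, Polynomial.aeval_def, Polynomial.hom_eval₂, constantCoeff_comp_algebraMap,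
    constantCoeff_X, Polynomial.coeff_zero_eq_eval_zero, Polynomial.eval₂_id]

theorem aeval_aeval_X {S : Type*} [CommRing S] [Algebra R S] (η : σ → S) (p : R[X]) (j : σ) :
    aeval η (Polynomial.aeval (X j : MvPolynomial σ R) p) = Polynomial.aeval (η j) p := by
  rw [← Polynomial.aeval_algHom_apply, aeval_X]

theorem dvd_aeval_sub_aeval {S : Type*} [CommRing S] [Algebra R S] {γ δ : σ → S} {d : S}
    (h : ∀ j, d ∣ γ j - δ j) (P : MvPolynomial σ R) : d ∣ aeval γ P - aeval δ P := by
  induction P using MvPolynomial.induction_on with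
  | C a => simp
  | add p q hp hq => simpa [add_sub_add_comm] using dvd_add hp hq
  | mul_X p j hp =>
    have e : aeval γ (p * X j) - aeval δ (p * X j) =
        (aeval γ p - aeval δ p) * γ j + aeval δ p * (γ j - δ j) := by
      simp only [map_mul, aeval_X]; ring
    rw [e]
    exact dvd_add (hp.mul_right _) ((h j).mul_left _)

theorem comp_aeval_polynomial (γ : σ → R[X]) (φ : R[X]) (P : MvPolynomial σ R) :
    (aeval γ P).comp φ = aeval (fun j => (γ j).comp φ) P := by
  simp only [Polynomial.comp_eq_aeval]
  exact DFunLike.congr_fun (comp_aeval γ (Polynomial.aeval φ)) P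

end MvPolynomial

section Jets

variable {R σ : Type*} [CommRing R]

/-- The paper's `S_γ^i`. -/
def solutionSet (k : ℕ) (γ : σ → R[X]) (i : ℕ) : Set (MvPolynomial σ R) :=
  {P | P.totalDegree ≤ k ∧ MvPolynomial.coeff 0 P = 0 ∧
    (Polynomial.X : R[X]) ^ (i + 1) ∣ MvPolynomial.aeval γ P}

theorem solutionSet_eq_of_dvd_sub_comp {γ δ : σ → R[X]} {φ : R[X]} {k i : ℕ}
    (hφ0 : φ.coeff 0 = 0) (hφ1 : IsUnit (φ.coeff 1))
    (h : ∀ j, Polynomial.X ^ (k + 1) ∣ δ j - (γ j).comp φ) (hi : i ≤ k) :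
    solutionSet k δ i = solutionSet k γ i := by
  ext P
  have hP : Polynomial.X ^ (i + 1) ∣ MvPolynomial.aeval δ P - (MvPolynomial.aeval γ P).comp φ := by
    rw [MvPolynomial.comp_aeval_polynomial]
    exact (pow_dvd_pow _ (by omega : i + 1 ≤ k + 1)).trans (MvPolynomial.dvd_aeval_sub_aeval h P)
  simp only [solutionSet, Set.mem_ofPred_eq, dvd_iff_dvd_of_dvd_sub hP, X_pow_dvd_comp_iff hφ0 hφ1]

theorem X_mem_solutionSet_one_iff {γ : σ → R[X]} {k : ℕ} (hk : 1 ≤ k) {j : σ}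
    (hγ0 : (γ j).coeff 0 = 0) : MvPolynomial.X j ∈ solutionSet k γ 1 ↔ (γ j).coeff 1 = 0 := by
  simp [solutionSet, (MvPolynomial.totalDegree_X_le j).trans hk, X_pow_dvd_iff,
    Nat.le_one_iff_eq_zero_or_eq_one, or_imp, forall_and, hγ0]

theorem dvd_sub_comp_of_solutionSet_subset {γ δ : σ → R[X]} {k : ℕ} (hk : 1 ≤ k) {j₀ j : σ}
    (hj₀ : Polynomial.X ^ (k + 1) ∣ γ j₀ - Polynomial.X) (hγ0 : (γ j).coeff 0 = 0)
    (hδ0 : (δ j₀).coeff 0 = 0) (hS : solutionSet k γ k ⊆ solutionSet k δ k) :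
    Polynomial.X ^ (k + 1) ∣ δ j - (γ j).comp (δ j₀) := by
  obtain ⟨r, hrdeg, hr⟩ := exists_natDegree_le_X_pow_dvd_sub (γ j) k
  have hr0 : r.coeff 0 = 0 := by
    have := X_pow_dvd_iff.mp hr 0 (by omega)
    rwa [Polynomial.coeff_sub, hγ0, zero_sub, neg_eq_zero] at this
  -- Since `γ j₀ ≡ t`, the jet `x_j - r(x_{j₀})` kills `γ` to order `k`.
  set P : MvPolynomial σ R := MvPolynomial.X j - Polynomial.aeval (MvPolynomial.X j₀) r
  have hP : ∀ η : σ → R[X], MvPolynomial.aeval η P = η j - r.comp (η j₀) := fun η => by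
    simp [P, MvPolynomial.aeval_aeval_X, Polynomial.comp_eq_aeval]
  have hPγ : P ∈ solutionSet k γ k := by
    refine ⟨?_, ?_, ?_⟩
    · exact (MvPolynomial.totalDegree_sub _ _).trans
        (max_le ((MvPolynomial.totalDegree_X_le j).trans hk)
          ((MvPolynomial.totalDegree_aeval_X_le r j₀).trans hrdeg))
    · simp [P, MvPolynomial.coeff_zero_aeval_X, hr0]
    · have := dvd_comp_sub_comp r hj₀
      rw [comp_X] at this
      rw [hP, ← sub_add_sub_cancel _ r]
      exact dvd_add hr (dvd_neg.mp (by simpa using this))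
  have hPδ := (hS hPγ).2.2
  rw [hP] at hPδ
  have := X_pow_dvd_comp hδ0 hr
  rw [sub_comp] at this
  simpa using dvd_sub hPδ this

end Jets

theorem statement0_general (n k : ℕ) (hk : 1 ≤ k)
    (γ δ : Fin n → Polynomial ℂ)
    (hγ0 : ∀ j, (γ j).coeff 0 = 0)
    (hγreg : ∃ j, (γ j).coeff 1 ≠ 0)
    (hδ0 : ∀ j, (δ j).coeff 0 = 0) :
    (∀ i : ℕ, 1 ≤ i → i ≤ k →
        {P : MvPolynomial (Fin n) ℂ |
            P.totalDegree ≤ k ∧ MvPolynomial.coeff 0 P = 0 ∧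
              (Polynomial.X : Polynomial ℂ) ^ (i + 1) ∣ MvPolynomial.aeval γ P} =
        {P : MvPolynomial (Fin n) ℂ |
            P.totalDegree ≤ k ∧ MvPolynomial.coeff 0 P = 0 ∧
              (Polynomial.X : Polynomial ℂ) ^ (i + 1) ∣ MvPolynomial.aeval δ P}) ↔
      ∃ φ : Polynomial ℂ, φ.coeff 0 = 0 ∧ φ.coeff 1 ≠ 0 ∧
        ∀ j, (Polynomial.X : Polynomial ℂ) ^ (k + 1) ∣ (δ j - (γ j).comp φ) := by
  change (∀ i, 1 ≤ i → i ≤ k → solutionSet k γ i = solutionSet k δ i) ↔ _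
  constructor
  · intro hS
    obtain ⟨j₀, hj₀⟩ := hγreg
    have hδj₀ : (δ j₀).coeff 1 ≠ 0 := by
      rw [Ne, ← X_mem_solutionSet_one_iff hk (hδ0 j₀), ← hS 1 le_rfl hk,
        X_mem_solutionSet_one_iff hk (hγ0 j₀)]
      exact hj₀
    obtain ⟨φ, hφ0, hφX⟩ := exists_X_pow_dvd_comp_sub_X (hγ0 j₀) hj₀.isUnit k
    have hφ1 := isUnit_coeff_one_of_X_pow_dvd_comp_sub_X (by omega) hφ0 hφX
    have hSφ : solutionSet k (fun j => (γ j).comp φ) k = solutionSet k δ k :=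
      (solutionSet_eq_of_dvd_sub_comp hφ0 hφ1 (fun j => by simp) le_rfl).trans (hS k hk le_rfl)
    refine ⟨φ.comp (δ j₀), coeff_zero_comp_eq_zero hφ0 (hδ0 j₀), ?_, fun j => ?_⟩
    · rw [coeff_one_comp _ (hδ0 j₀)]
      exact mul_ne_zero hφ1.ne_zero hδj₀
    · rw [← comp_assoc]
      exact dvd_sub_comp_of_solutionSet_subset (γ := fun j => (γ j).comp φ) hk hφX
        (coeff_zero_comp_eq_zero (hγ0 j) hφ0) (hδ0 j₀) hSφ.subset
  · rintro ⟨φ, hφ0, hφ1, h⟩ i - hi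
    exact (solutionSet_eq_of_dvd_sub_comp hφ0 hφ1.isUnit h hi).symm

/-- The map sending a regular `k`-jet `γ` of a curve in `ℂⁿ` to the flag of
solution spaces `S_γ^1 ⊇ … ⊇ S_γ^k` (where `S_γ^i` consists of those polynomials `P` of total
degree at most `k` with zero constant term such that `P(γ(t)) ≡ 0 mod t^{i+1}`) is invariant
under reparametrisation and injective on reparametrisation orbits: two regular `k`-jets `γ`, `δ`
have the same solution flags iff `δ = γ ∘ φ mod t^{k+1}` for some `φ ∈ ℂ[t]` with `φ(0) = 0`
and nonzero coefficient of `t`. -/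
theorem statement0 (n k : ℕ) (hn : 1 ≤ n) (hk : 1 ≤ k)
    (γ δ : Fin n → Polynomial ℂ)
    (hγdeg : ∀ j, (γ j).natDegree ≤ k) (hγ0 : ∀ j, (γ j).coeff 0 = 0)
    (hγreg : ∃ j, (γ j).coeff 1 ≠ 0)
    (hδdeg : ∀ j, (δ j).natDegree ≤ k) (hδ0 : ∀ j, (δ j).coeff 0 = 0)
    (hδreg : ∃ j, (δ j).coeff 1 ≠ 0) :
    (∀ i : ℕ, 1 ≤ i → i ≤ k →
        {P : MvPolynomial (Fin n) ℂ |
            P.totalDegree ≤ k ∧ MvPolynomial.coeff 0 P = 0 ∧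
              (Polynomial.X : Polynomial ℂ) ^ (i + 1) ∣ MvPolynomial.aeval γ P} =
        {P : MvPolynomial (Fin n) ℂ |
            P.totalDegree ≤ k ∧ MvPolynomial.coeff 0 P = 0 ∧
              (Polynomial.X : Polynomial ℂ) ^ (i + 1) ∣ MvPolynomial.aeval δ P}) ↔
      ∃ φ : Polynomial ℂ, φ.coeff 0 = 0 ∧ φ.coeff 1 ≠ 0 ∧
        ∀ j, (Polynomial.X : Polynomial ℂ) ^ (k + 1) ∣ (δ j - (γ j).comp φ) :=
  statement0_general n k hk γ δ hγ0 hγreg hδ0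
end

section
/- Let n, k ≥ 1, let γ = (γ₁,…,γₙ) be a regular k-jet of a curve in ℂⁿ, and let 1 ≤ i ≤ k. Let V be the ℂ-vector space of polynomials in ℂ[x₁,…,xₙ] of total degree at most k with zero constant term. Then the linear map V → ℂ^i sending P to the tuple of coefficients of t¹, t², …, t^i of the one-variable polynomial P(γ₁(t),…,γₙ(t)) is surjective; equivalently, the subspace S_γ^i = {P ∈ V : P(γ₁(t),…,γₙ(t)) ≡ 0 mod t^{i+1}} has codimension exactly i in V. -/
open Polynomial MvPolynomial

lemma aux_coeff_pow_lt (q : Polynomial ℂ) (h0 : q.coeff 0 = 0) {d m : ℕ} (hm : m < d) :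
    (q ^ d).coeff m = 0 := by
  have hX : Polynomial.X ∣ q := Polynomial.X_dvd_iff.mpr h0
  obtain ⟨s, hs⟩ := hX
  have : q ^ d = s ^ d * Polynomial.X ^ d := by rw [hs]; ring
  rw [this, Polynomial.coeff_mul_X_pow']
  simp [Nat.not_le_of_lt hm]

lemma aux_coeff_pow_diag (q : Polynomial ℂ) (h0 : q.coeff 0 = 0) (d : ℕ) :
    (q ^ d).coeff d = (q.coeff 1) ^ d := by
  have hX : Polynomial.X ∣ q := Polynomial.X_dvd_iff.mpr h0
  obtain ⟨s, hs⟩ := hX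
  have hq1 : q.coeff 1 = s.coeff 0 := by
    rw [hs, Polynomial.coeff_X_mul]
  have : q ^ d = s ^ d * Polynomial.X ^ d := by rw [hs]; ring
  rw [this, Polynomial.coeff_mul_X_pow', hq1]
  simp [Polynomial.coeff_zero_eq_eval_zero]

/-- For a regular `k`-jet `γ` of a curve in `ℂⁿ` and `1 ≤ i ≤ k`, the linear
map sending a polynomial `P ∈ ℂ[x₁,…,xₙ]` of total degree at most `k` with zero constant term
to the tuple of coefficients of `t¹, …, tⁱ` of `P(γ(t))` is surjective: every prescribed tuple
of values is attained.  Equivalently, `S_γ^i` has codimension exactly `i` in `V`. -/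
theorem statement1 (n k : ℕ) (hn : 1 ≤ n) (hk : 1 ≤ k) (i : ℕ) (hi1 : 1 ≤ i) (hik : i ≤ k)
    (γ : Fin n → Polynomial ℂ)
    (hdeg : ∀ j, (γ j).natDegree ≤ k) (h0 : ∀ j, (γ j).coeff 0 = 0)
    (hreg : ∃ j, (γ j).coeff 1 ≠ 0) :
    ∀ c : Fin i → ℂ, ∃ P : MvPolynomial (Fin n) ℂ,
      P.totalDegree ≤ k ∧ MvPolynomial.coeff 0 P = 0 ∧
        ∀ m : Fin i, (MvPolynomial.aeval γ P).coeff (m.1 + 1) = c m := by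
  obtain ⟨j, ha⟩ := hreg
  intro c
  set q := γ j with hq
  set M : Matrix (Fin i) (Fin i) ℂ := fun m l => (q ^ (l.1 + 1)).coeff (m.1 + 1) with hM
  have htri : M.BlockTriangular OrderDual.toDual := by
    intro m l h
    have hml : m < l := h
    exact aux_coeff_pow_lt q (h0 j) (by omega)
  have hdet : M.det ≠ 0 := by
    rw [Matrix.det_of_lowerTriangular M htri]
    apply Finset.prod_ne_zero_iff.mpr
    intro m _
    rw [hM]
    simp only
    rw [aux_coeff_pow_diag q (h0 j)]
    exact pow_ne_zero _ ha
  have hunit : IsUnit M.det := isUnit_iff_ne_zero.mpr hdet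
  set b : Fin i → ℂ := M⁻¹.mulVec c with hb
  have hMb : M.mulVec b = c := by
    rw [hb, Matrix.mulVec_mulVec, Matrix.mul_nonsing_inv M hunit, Matrix.one_mulVec]
  refine ⟨∑ l : Fin i, MvPolynomial.C (b l) * (MvPolynomial.X j) ^ (l.1 + 1), ?_, ?_, ?_⟩
  · apply le_trans (MvPolynomial.totalDegree_finset_sum _ _)
    apply Finset.sup_le
    intro l _
    calc (MvPolynomial.C (b l) * MvPolynomial.X j ^ (l.1 + 1)).totalDegree
        ≤ (MvPolynomial.C (b l) : MvPolynomial (Fin n) ℂ).totalDegree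
            + ((MvPolynomial.X j : MvPolynomial (Fin n) ℂ) ^ (l.1 + 1)).totalDegree :=
          MvPolynomial.totalDegree_mul _ _
      _ ≤ 0 + (l.1 + 1) := by
          gcongr
          · exact le_of_eq (MvPolynomial.totalDegree_C _)
          · exact MvPolynomial.totalDegree_pow _ _ |>.trans (by simp)
      _ ≤ k := by have := l.2; omega
  · rw [← MvPolynomial.constantCoeff_eq]
    simp
  · intro m
    rw [map_sum, Polynomial.finset_sum_coeff]
    have : ∀ l : Fin i,
        ((MvPolynomial.aeval γ) (MvPolynomial.C (b l) * MvPolynomial.X j ^ (l.1 + 1))).coeff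
          (m.1 + 1) = M m l * b l := by
      intro l
      rw [map_mul, map_pow, MvPolynomial.aeval_C, MvPolynomial.aeval_X]
      rw [Polynomial.algebraMap_eq, Polynomial.coeff_C_mul]
      rw [hM]
      ring
    refine (Finset.sum_congr rfl fun l _ => this l).trans ?_
    have := congrFun hMb m
    rw [Matrix.mulVec, dotProduct] at this
    exact this
end

section
/- Let 1 ≤ k ≤ n, let λ₁,…,λₙ ∈ ℂ be pairwise distinct, and let Q(z₁,…,z_k) be a homogeneous polynomial. Then ∑_σ Q(λ_{σ(1)},…,λ_{σ(k)}) / ∏_{m=1}^{k} ∏_{i ∉ {σ(1),…,σ(m)}} (λ_i − λ_{σ(m)}) — the sum running over all injective maps σ : {1,…,k} → {1,…,n}, the inner product over all i ∈ {1,…,n} not in the image of {1,…,m} under σ — equals the iterated residue at infinity Res_{z₁=∞} ⋯ Res_{z_k=∞} [ ∏_{1 ≤ m < l ≤ k} (z_m − z_l) · Q(z₁,…,z_k) / ∏_{l=1}^{k} ∏_{i=1}^{n} (λ_i − z_l) ] dz₁⋯dz_k, which concretely means: for all sufficiently large R₁ > 0, then for all sufficiently large R₂, …, then for all sufficiently large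 R_k, the left-hand side equals (−1)^k · (1/(2πi))^k ∮_{|z₁|=R₁} ⋯ ∮_{|z_k|=R_k} [∏_{m<l}(z_m − z_l) · Q(z)] / [∏_{l=1}^{k}∏_{i=1}^{n}(λ_i − z_l)] dz_k⋯dz₁, over positively oriented circles. -/
open Polynomial MvPolynomial

/-- The iterated contour integral
`∮_{|z₁|=R₁} ⋯ ∮_{|z_k|=R_k} f(z₁,…,z_k) dz_k ⋯ dz₁`
over positively oriented circles, the outermost integral being taken in the first variable. -/
noncomputable def iteratedCircleIntegral : (k : ℕ) → ((Fin k → ℂ) → ℂ) → (Fin k → ℝ) → ℂ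
  | 0, f, _ => f ![]
  | k + 1, f, R =>
      ∮ z in C(0, R 0), iteratedCircleIntegral k (fun w => f (Fin.cons z w)) (fun j => R j.succ)

/-- `NestedLarge k P` says: for all sufficiently large `R₁`, then for all sufficiently large
`R₂` (depending on `R₁`), …, then for all sufficiently large `R_k` (depending on the previous
radii), the predicate `P (R₁,…,R_k)` holds. -/
def NestedLarge : (k : ℕ) → ((Fin k → ℝ) → Prop) → Prop
  | 0, P => P ![]
  | k + 1, P => ∃ T : ℝ, ∀ R : ℝ, T ≤ R → NestedLarge k fun Rs => P (Fin.cons R Rs)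

/-!
Every circle of radius larger than all `‖λᵢ‖` encloses all the poles, so the contour integrals can
be evaluated one variable at a time by residues: partial fractions and Cauchy's formula give
`∮ f(z) / ∏ᵢ (λᵢ - z) dz = -2πi ∑ⱼ f(λⱼ) / ∏_{i ≠ j} (λᵢ - λⱼ)` for holomorphic `f`. Iterating,
the integral is `(-2πi)^k` times a sum over all maps `σ : Fin k → Fin n` (in particular the radii
need not be nested). The Vandermonde factor `∏_{m < l} (z_m - z_l)` kills the terms with `σ` not
injective, and for injective `σ` it cancels the factors `λ_{σ m'} - λ_{σ m}`, `m' < m`, of the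
denominator, which leaves the fixed point sum.
-/

open Finset Metric

theorem Finset.prod_filter_fst_lt_snd {α M : Type*} [Fintype α] [LT α] [DecidableLT α]
    [CommMonoid M] (g : α → α → M) :
    ∏ p ∈ univ.filter (fun p : α × α => p.1 < p.2), g p.1 p.2 =
      ∏ m, ∏ m' ∈ univ.filter (· < m), g m' m := by
  rw [prod_filter, ← univ_product_univ, prod_product, prod_comm]
  simp_rw [prod_filter]

theorem Finset.prod_erase_apply_eq_prod_filter_mul {α β M : Type*} [Fintype α] [PartialOrder α]
    [DecidableLE α] [DecidableLT α] [Fintype β] [DecidableEq β] [CommMonoid M] {σ : α → β}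
    (hσ : Function.Injective σ) (m : α) (g : β → M) :
    ∏ i ∈ univ.erase (σ m), g i =
      (∏ i ∈ univ.filter (fun i => ∀ m', m' ≤ m → σ m' ≠ i), g i) *
        ∏ m' ∈ univ.filter (· < m), g (σ m') := by
  rw [← prod_image hσ.injOn, ← prod_union]
  · congr 1
    ext i
    simp only [mem_erase, mem_univ, and_true, mem_union, mem_filter, true_and, mem_image]
    constructor
    · refine fun hi => or_iff_not_imp_right.2 fun h m' hm' hm'i => ?_
      rcases hm'.lt_or_eq with hlt | rfl
      · exact h ⟨m', hlt, hm'i⟩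
      · exact hi hm'i.symm
    · rintro (h | ⟨m', hm', rfl⟩)
      · exact (h m le_rfl).symm
      · exact hσ.ne hm'.ne
  · simp only [disjoint_left, mem_filter, mem_univ, true_and, mem_image, not_exists, not_and]
    exact fun i hi m' hm' hm'i => hi m' hm'.le hm'i

theorem inv_prod_sub_eq_sum {n : ℕ} [NeZero n] {lam : Fin n → ℂ} (hlam : Function.Injective lam)
    {z : ℂ} (hz : ∀ i, z ≠ lam i) :
    (∏ i, (lam i - z))⁻¹ = ∑ j, (∏ i ∈ univ.erase j, (lam i - lam j))⁻¹ * (lam j - z)⁻¹ := by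
  have h := Lagrange.eval_interpolate_not_at_node (s := univ) (v := fun i => -lam i) (x := -z) 1
    (fun i _ => by simpa using (hz i))
  rw [Lagrange.interpolate_one (fun i _ j _ h => hlam (neg_inj.mp h)) univ_nonempty] at h
  simp only [Polynomial.eval_one, Lagrange.eval_nodal, Lagrange.nodalWeight,
    neg_sub_neg, Pi.one_apply, mul_one, prod_inv_distrib] at h
  exact inv_eq_of_mul_eq_one_right h.symm

theorem circleIntegral_div_prod_sub {n : ℕ} {lam : Fin n → ℂ} (hlam : Function.Injective lam)
    {f : ℂ → ℂ} {c : ℂ} {R : ℝ} (hR : 0 ≤ R) (hf : DifferentiableOn ℂ f (closedBall c R))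
    (hlamR : ∀ i, lam i ∈ ball c R) :
    (∮ z in C(c, R), f z / ∏ i, (lam i - z)) =
      -(2 * Real.pi * Complex.I) * ∑ j, f (lam j) / ∏ i ∈ univ.erase j, (lam i - lam j) := by
  rcases n.eq_zero_or_pos with rfl | hn
  · simp only [univ_eq_empty, prod_empty, div_one, sum_empty, mul_zero]
    exact Complex.circleIntegral_eq_zero_of_differentiable_on_off_countable hR Set.countable_empty
      hf.continuousOn fun z hz => hf.differentiableAt (closedBall_mem_nhds_of_mem hz.1)
  have : NeZero n := ⟨hn.ne'⟩
  have hsphere : ∀ z ∈ sphere c R, ∀ i, z ≠ lam i := fun z hz i =>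
    sphere_disjoint_ball.ne_of_mem hz (hlamR i)
  set w : Fin n → ℂ := fun j => (∏ i ∈ univ.erase j, (lam i - lam j))⁻¹
  have hpf : Set.EqOn (fun z => f z / ∏ i, (lam i - z))
      (fun z => ∑ j, -w j • ((z - lam j)⁻¹ • f z)) (sphere c R) := fun z hz => by
    simp only [div_eq_mul_inv, inv_prod_sub_eq_sum hlam (hsphere z hz), mul_sum]
    refine sum_congr rfl fun j _ => ?_
    rw [← neg_sub z (lam j), inv_neg, smul_eq_mul, smul_eq_mul]
    ring
  have hint : ∀ j, CircleIntegrable (fun z => (z - lam j)⁻¹ • f z) c R := fun j =>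
    ContinuousOn.circleIntegrable hR <|
      ((continuousOn_id.sub continuousOn_const).inv₀ fun z hz => sub_ne_zero.2 (hsphere z hz j)).smul
        (hf.continuousOn.mono sphere_subset_closedBall)
  rw [circleIntegral.integral_congr hR hpf,
    circleIntegral.integral_fun_sum (f := fun j z => -w j • ((z - lam j)⁻¹ • f z))
      fun j _ => (hint j).const_smul, mul_sum]
  refine sum_congr rfl fun j _ => ?_
  rw [circleIntegral.integral_smul, hf.circleIntegral_sub_inv_smul (hlamR j), smul_eq_mul,
    smul_eq_mul, div_eq_mul_inv]
  ring

theorem iteratedCircleIntegral_const_mul {k : ℕ} (c : ℂ) (f : (Fin k → ℂ) → ℂ) (R : Fin k → ℝ) :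
    iteratedCircleIntegral k (fun z => c * f z) R = c * iteratedCircleIntegral k f R := by
  induction k with
  | zero => rfl
  | succ k ih =>
    simp only [iteratedCircleIntegral, ih]
    exact circleIntegral.integral_const_mul _ _ _ _

theorem nestedLarge_of_forall_le {k : ℕ} {P : (Fin k → ℝ) → Prop} (T : ℝ)
    (h : ∀ R : Fin k → ℝ, (∀ l, T ≤ R l) → P R) : NestedLarge k P := by
  induction k with
  | zero => exact h ![] finZeroElim
  | succ k ih =>
    exact ⟨T, fun R hR => ih fun Rs hRs => h (Fin.cons R Rs) (Fin.cases hR hRs)⟩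

section ResidueSum

variable {n : ℕ} (lam : Fin n → ℂ)

noncomputable def residueSum (k : ℕ) (F : (Fin k → ℂ) → ℂ) : ℂ :=
  ∑ σ : Fin k → Fin n, F (lam ∘ σ) / ∏ l, ∏ i ∈ univ.erase (σ l), (lam i - lam (σ l))

theorem residueSum_succ {k : ℕ} (F : (Fin (k + 1) → ℂ) → ℂ) :
    residueSum lam (k + 1) F = ∑ j, residueSum lam k (fun w => F (Fin.cons (lam j) w)) /
      ∏ i ∈ univ.erase j, (lam i - lam j) := by
  simp only [residueSum, ← (Fin.consEquiv fun _ => Fin n).sum_comp, Fintype.sum_prod_type,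
    sum_div]
  refine sum_congr rfl fun j _ => sum_congr rfl fun τ _ => ?_
  simp only [Fin.consEquiv, Equiv.coe_fn_mk, Fin.comp_cons, Fin.prod_univ_succ, Fin.cons_zero,
    Fin.cons_succ, div_div, mul_comm]

theorem differentiable_residueSum_finCons {k : ℕ} {F : (Fin (k + 1) → ℂ) → ℂ} (hF : Differentiable ℂ F) :
    Differentiable ℂ fun z => residueSum lam k fun w => F (Fin.cons z w) := by
  unfold residueSum
  fun_prop

end ResidueSum

theorem iteratedCircleIntegral_div_prod_sub {n : ℕ} {lam : Fin n → ℂ}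
    (hlam : Function.Injective lam) {k : ℕ} {F : (Fin k → ℂ) → ℂ} (hF : Differentiable ℂ F)
    {R : Fin k → ℝ} (hR : ∀ l, 0 ≤ R l) (hlamR : ∀ l i, lam i ∈ ball 0 (R l)) :
    iteratedCircleIntegral k (fun z => F z / ∏ l, ∏ i, (lam i - z l)) R =
      (-(2 * Real.pi * Complex.I)) ^ k * residueSum lam k F := by
  induction k with
  | zero =>
    simp only [iteratedCircleIntegral, residueSum, univ_unique, univ_eq_empty, prod_empty, div_one,
      sum_singleton, pow_zero, one_mul]
    exact congrArg F (Subsingleton.elim _ _)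
  | succ k ih =>
    have hinner : ∀ z, iteratedCircleIntegral k
        (fun w => F (Fin.cons z w) / ∏ l, ∏ i, (lam i - (Fin.cons z w : Fin (k + 1) → ℂ) l))
        (fun l => R l.succ) =
        (-(2 * Real.pi * Complex.I)) ^ k *
          ((residueSum lam k fun w => F (Fin.cons z w)) / ∏ i, (lam i - z)) := fun z => by
      have hsplit : (fun w => F (Fin.cons z w) /
          ∏ l, ∏ i, (lam i - (Fin.cons z w : Fin (k + 1) → ℂ) l)) =
          fun w => (∏ i, (lam i - z))⁻¹ * (F (Fin.cons z w) / ∏ l, ∏ i, (lam i - w l)) := by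
        ext w
        rw [Fin.prod_univ_succ, Fin.cons_zero]
        simp only [Fin.cons_succ]
        ring
      rw [hsplit, iteratedCircleIntegral_const_mul,
        ih (F := fun w => F (Fin.cons z w)) (by fun_prop) (fun l => hR l.succ)
          fun l => hlamR l.succ]
      ring
    rw [iteratedCircleIntegral, circleIntegral.integral_congr (hR 0) fun z _ => hinner z,
      circleIntegral.integral_const_mul,
      circleIntegral_div_prod_sub hlam (hR 0) (differentiable_residueSum_finCons lam hF).differentiableOn
        (hlamR 0), residueSum_succ]
    ring

theorem residueSum_vandermonde_mul {n k : ℕ} {lam : Fin n → ℂ} (hlam : Function.Injective lam)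
    (G : (Fin k → ℂ) → ℂ) :
    residueSum lam k (fun z => (∏ p ∈ univ.filter (fun p : Fin k × Fin k => p.1 < p.2),
        (z p.1 - z p.2)) * G z) =
      ∑ σ : Fin k ↪ Fin n, G (lam ∘ σ) /
        ∏ m, ∏ i ∈ univ.filter (fun i => ∀ m', m' ≤ m → σ m' ≠ i), (lam i - lam (σ m)) := by
  set V : (Fin k → Fin n) → ℂ := fun σ =>
    ∏ p ∈ univ.filter (fun p : Fin k × Fin k => p.1 < p.2), (lam (σ p.1) - lam (σ p.2))
  have hV : ∀ σ, V σ = 0 ↔ ¬Function.Injective σ := fun σ => by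
    simp only [V, prod_eq_zero_iff, mem_filter, mem_univ, true_and, sub_eq_zero, hlam.eq_iff,
      Prod.exists, Function.Injective, not_forall]
    constructor
    · rintro ⟨a, b, hab, h⟩
      exact ⟨a, b, h, hab.ne⟩
    · rintro ⟨a, b, h, hab⟩
      rcases Ne.lt_or_gt hab with hab | hab
      exacts [⟨a, b, hab, h⟩, ⟨b, a, hab, h.symm⟩]
  have hterm : ∀ σ : Fin k ↪ Fin n, V σ * G (lam ∘ σ) /
      ∏ l, ∏ i ∈ univ.erase (σ l), (lam i - lam (σ l)) =
      G (lam ∘ σ) /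
        ∏ m, ∏ i ∈ univ.filter (fun i => ∀ m', m' ≤ m → σ m' ≠ i), (lam i - lam (σ m)) := by
    intro σ
    rw [prod_congr rfl fun m _ => prod_erase_apply_eq_prod_filter_mul σ.injective m _,
      prod_mul_distrib, ← prod_filter_fst_lt_snd (fun m' m => lam (σ m') - lam (σ m)),
      mul_comm _ (V σ)]
    -- `convert` only has to match the decidability instances of the two filters
    convert mul_div_mul_left (G (lam ∘ σ)) _ (mt (hV σ).1 (not_not.2 σ.injective))
  unfold residueSum
  calc _ = ∑ σ ∈ univ.filter Function.Injective, V σ * G (lam ∘ σ) /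
        ∏ l, ∏ i ∈ univ.erase (σ l), (lam i - lam (σ l)) :=
        (sum_filter_of_ne fun σ _ hσ => not_not.1 fun h => hσ (by rw [(hV σ).2 h]; simp)).symm
    _ = _ := by
      rw [sum_subtype (p := Function.Injective) _ fun σ => by simp]
      exact Fintype.sum_equiv (Equiv.subtypeInjectiveEquivEmbedding _ _) _ _ fun σ =>
        hterm (Equiv.subtypeInjectiveEquivEmbedding _ _ σ)

theorem statement4_general (n k : ℕ)
    (lam : Fin n → ℂ) (hlam : Function.Injective lam)
    (Q : MvPolynomial (Fin k) ℂ) :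
    NestedLarge k fun R =>
      (∑ σ : Fin k ↪ Fin n,
          MvPolynomial.eval (fun m => lam (σ m)) Q /
            ∏ m : Fin k,
              ∏ i ∈ Finset.univ.filter (fun i : Fin n => ∀ m' : Fin k, m' ≤ m → σ m' ≠ i),
                (lam i - lam (σ m))) =
        (-1 : ℂ) ^ k * (1 / (2 * Real.pi * Complex.I)) ^ k *
          iteratedCircleIntegral k
            (fun z =>
              (∏ pr ∈ Finset.univ.filter (fun pr : Fin k × Fin k => pr.1 < pr.2),
                  (z pr.1 - z pr.2)) * MvPolynomial.eval z Q /
                ∏ l : Fin k, ∏ i : Fin n, (lam i - z l)) R := by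
  have hT : 0 ≤ ∑ i, ‖lam i‖ := sum_nonneg fun i _ => norm_nonneg _
  refine nestedLarge_of_forall_le (∑ i, ‖lam i‖ + 1) fun R hR => ?_
  have hRlam : ∀ l i, lam i ∈ ball 0 (R l) := fun l i => mem_ball_zero_iff.2 <| by
    linarith [hR l, single_le_sum (fun j _ => norm_nonneg (lam j)) (mem_univ i)]
  have hQ : Differentiable ℂ fun z => MvPolynomial.eval z Q :=
    differentiableOn_univ.1 (AnalyticOnNhd.eval_mvPolynomial Q).differentiableOn
  rw [iteratedCircleIntegral_div_prod_sub hlam (by fun_prop) (fun l => by linarith [hR l]) hRlam,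
    residueSum_vandermonde_mul hlam, ← mul_assoc, ← mul_pow, ← mul_pow,
    show -1 * (1 / (2 * Real.pi * Complex.I)) * -(2 * Real.pi * Complex.I) = 1 by field_simp,
    one_pow, one_mul]
  rfl

/-- Proposition 4.9 of Bérczi, transforming the Atiyah–Bott localisation sum
into an iterated residue.  For `1 ≤ k ≤ n`, pairwise distinct `λ₁,…,λₙ ∈ ℂ` and a homogeneous
polynomial `Q(z₁,…,z_k)`, the fixed point sum
`∑_σ Q(λ_{σ(1)},…,λ_{σ(k)}) / ∏_{m=1}^k ∏_{i ∉ {σ(1),…,σ(m)}} (λ_i − λ_{σ(m)})`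
over injective maps `σ : {1,…,k} → {1,…,n}` equals the iterated residue at infinity
`Res_{z=∞} ∏_{m<l}(z_m − z_l) Q(z) dz / ∏_{l=1}^k ∏_{i=1}^n (λ_i − z_l)`, i.e. for all
sufficiently large nested radii `R₁ ≪ ⋯ ≪ R_k` it equals
`(−1)^k (1/(2πi))^k` times the iterated contour integral. -/
theorem statement4 (n k : ℕ) (hk : 1 ≤ k) (hkn : k ≤ n)
    (lam : Fin n → ℂ) (hlam : Function.Injective lam)
    (d : ℕ) (Q : MvPolynomial (Fin k) ℂ) (hQ : Q.IsHomogeneous d) :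
    NestedLarge k fun R =>
      (∑ σ : Fin k ↪ Fin n,
          MvPolynomial.eval (fun m => lam (σ m)) Q /
            ∏ m : Fin k,
              ∏ i ∈ Finset.univ.filter (fun i : Fin n => ∀ m' : Fin k, m' ≤ m → σ m' ≠ i),
                (lam i - lam (σ m))) =
        (-1 : ℂ) ^ k * (1 / (2 * Real.pi * Complex.I)) ^ k *
          iteratedCircleIntegral k
            (fun z =>
              (∏ pr ∈ Finset.univ.filter (fun pr : Fin k × Fin k => pr.1 < pr.2),
                  (z pr.1 - z pr.2)) * MvPolynomial.eval z Q /
                ∏ l : Fin k, ∏ i : Fin n, (lam i - z l)) R :=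
  statement4_general n k lam hlam Q
end

section
/- Let n ≥ 1 and let i, a, b ∈ ℕⁿ be vectors of natural numbers such that every entry of b is 0 or 1, ∑_t a_t = ∑_t b_t, a_t·b_t = 0 for every t, and i_t ≥ b_t for every t. Set N = ∑_t i_t (so that the entries of i + a − b are nonnegative and also sum to N). Then the multinomial coefficients satisfy N! / ∏_{t=1}^{n} (i_t + a_t − b_t)! ≤ N^{∑_t b_t} · N! / ∏_{t=1}^{n} i_t! . -/
open Finset

open scoped Nat

theorem Nat.factorial_le_pow_mul_factorial_add_sub {i a b N : ℕ} (hb : b ≤ 1) (hab : a * b = 0)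
    (hbi : b ≤ i) (hiN : i ≤ N) : i ! ≤ N ^ b * (i + a - b)! := by
  rcases Nat.le_one_iff_eq_zero_or_eq_one.mp hb with rfl | rfl
  · simpa using Nat.factorial_le (Nat.le_add_right i a)
  · obtain rfl : a = 0 := by simpa using hab
    calc i ! = i * (i - 1)! := (Nat.mul_factorial_pred (by omega)).symm
      _ ≤ N ^ 1 * (i + 0 - 1)! := by simpa using Nat.mul_le_mul_right _ hiN

theorem Finset.prod_factorial_le_pow_sum_mul_prod_factorial {ι : Type*} (s : Finset ι)
    (i a b : ι → ℕ) (hb : ∀ t ∈ s, b t ≤ 1) (hab : ∀ t ∈ s, a t * b t = 0)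
    (hbi : ∀ t ∈ s, b t ≤ i t) :
    ∏ t ∈ s, (i t)! ≤
      (∑ t ∈ s, i t) ^ (∑ t ∈ s, b t) * ∏ t ∈ s, (i t + a t - b t)! := by
  rw [← prod_pow_eq_pow_sum, ← prod_mul_distrib]
  exact prod_le_prod' fun t ht => Nat.factorial_le_pow_mul_factorial_add_sub (hb t ht) (hab t ht)
    (hbi t ht) (single_le_sum (fun _ _ => Nat.zero_le _) ht)

theorem statement6_general (n : ℕ) (i a b : Fin n → ℕ)
    (hb : ∀ t, b t ≤ 1)
    (hdisj : ∀ t, a t * b t = 0) (hib : ∀ t, b t ≤ i t) :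
    (Nat.factorial (∑ t, i t) : ℚ) / ∏ t, (Nat.factorial (i t + a t - b t) : ℚ) ≤
      ((∑ t, i t : ℕ) : ℚ) ^ (∑ t, b t) *
        ((Nat.factorial (∑ t, i t) : ℚ) / ∏ t, (Nat.factorial (i t) : ℚ)) := by
  have key : (∏ t, (i t)! : ℚ) ≤
      ((∑ t, i t : ℕ) : ℚ) ^ (∑ t, b t) * ∏ t, ((i t + a t - b t)! : ℚ) := by
    exact_mod_cast prod_factorial_le_pow_sum_mul_prod_factorial univ i a b (fun t _ => hb t)
      (fun t _ => hdisj t) (fun t _ => hib t)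
  have hpos : ∀ f : Fin n → ℕ, (0 : ℚ) < ∏ t, ((f t)! : ℚ) :=
    fun f => prod_pos fun t _ => by exact_mod_cast Nat.factorial_pos _
  rw [mul_div_assoc', div_le_div_iff₀ (hpos _) (hpos _), mul_comm _ (_ ! : ℚ), mul_assoc]
  gcongr

/-- multinomial coefficient ratio estimate.  Let `i, a, b ∈ ℕⁿ` with every
entry of `b` equal to `0` or `1`, `∑ a = ∑ b`, `a` and `b` with disjoint supports
(`a_t · b_t = 0`), and `b_t ≤ i_t` for all `t`.  With `N = ∑ i_t`, the multinomial
coefficients satisfy `N! / ∏ (i_t + a_t − b_t)! ≤ N^{∑ b} · N! / ∏ i_t!`. -/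
theorem statement6 (n : ℕ) (hn : 1 ≤ n) (i a b : Fin n → ℕ)
    (hb : ∀ t, b t ≤ 1) (hsum : ∑ t, a t = ∑ t, b t)
    (hdisj : ∀ t, a t * b t = 0) (hib : ∀ t, b t ≤ i t) :
    (Nat.factorial (∑ t, i t) : ℚ) / ∏ t, (Nat.factorial (i t + a t - b t) : ℚ) ≤
      ((∑ t, i t : ℕ) : ℚ) ^ (∑ t, b t) *
        ((Nat.factorial (∑ t, i t) : ℚ) / ∏ t, (Nat.factorial (i t) : ℚ)) :=
  statement6_general n i a b hb hdisj hib
end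

section
/- In the formal power series ring ℤ[[a, b]] in two variables, every coefficient of the series (1 − a)(1 − ab)(1 − b) · [(1 − 2a)(1 − 2ab)(1 − b − ab)]^{−1} is nonnegative. (Each of the three factors 1 − 2a, 1 − 2ab, 1 − b − ab has constant term 1 and hence is invertible in ℤ[[a,b]].) Consequently, all coefficients of the Laurent expansion of the Thom series Tp₃(z₁,z₂,z₃) = (z₁−z₂)(z₁−z₃)(z₂−z₃)/((2z₁−z₂)(z₁+z₂−z₃)(2z₁−z₃)) in the domain |z₁| ≪ |z₂| ≪ |z₃| are nonnegative, i.e. the positivity conjecture for Thom polynomial coefficients of Morin singularities holds for k = 3. -/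
/-!
Each denominator factor has the shape `1 - (f + g)` with `f`, `g` having nonnegative coefficients
and zero constant term, and is paired with the numerator factor `1 - f`:
`1 - 2a = 1 - (a + a)`, `1 - 2ab = 1 - (ab + ab)`, `1 - b - ab = 1 - (b + ab)`.
If `(1 - (f + g)) h = 1` then `h = 1 + (f + g) h` has nonnegative coefficients,
hence so does `(1 - f) h = 1 + g h`, and the series is the product of these three.
-/

namespace MvPowerSeries

variable {σ R : Type*} [CommRing R] [PartialOrder R] [IsOrderedRing R]

def CoeffNonneg (f : MvPowerSeries σ R) : Prop := ∀ d, 0 ≤ coeff d f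

namespace CoeffNonneg

theorem one : CoeffNonneg (1 : MvPowerSeries σ R) := fun d => by
  classical
  rw [coeff_one]
  split <;> simp

theorem X (i : σ) : CoeffNonneg (X i : MvPowerSeries σ R) := fun d => by
  classical
  rw [coeff_X]
  split <;> simp

theorem add {f g : MvPowerSeries σ R} (hf : CoeffNonneg f) (hg : CoeffNonneg g) :
    CoeffNonneg (f + g) := fun d => by
  rw [map_add]
  exact add_nonneg (hf d) (hg d)

theorem mul {f g : MvPowerSeries σ R} (hf : CoeffNonneg f) (hg : CoeffNonneg g) :
    CoeffNonneg (f * g) := fun d => by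
  classical
  rw [coeff_mul]
  exact Finset.sum_nonneg fun p _ => mul_nonneg (hf p.1) (hg p.2)

/-- Since `f` has no constant term, the coefficient of `f h` at `d` in `h = 1 + f h` only
involves coefficients of `h` at exponents `< d`. -/
theorem of_one_sub_mul_eq_one {f h : MvPowerSeries σ R} (hf0 : constantCoeff f = 0)
    (hf : CoeffNonneg f) (hh : (1 - f) * h = 1) : CoeffNonneg h := by
  classical
  have hrec : h = 1 + f * h := by linear_combination hh
  intro d
  induction d using WellFoundedLT.induction with
  | _ d ih =>
  rw [hrec, map_add, coeff_mul]
  refine add_nonneg (one d) (Finset.sum_nonneg fun p hp => ?_)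
  obtain ⟨e, k⟩ := p
  rcases eq_or_ne e 0 with rfl | he
  · simp [hf0]
  · have hk : k < d := by
      rw [← Finset.HasAntidiagonal.mem_antidiagonal.mp hp]
      exact lt_add_of_pos_left k (pos_iff_ne_zero.mpr he)
    exact mul_nonneg (hf e) (ih k hk)

theorem one_sub_mul {f g h : MvPowerSeries σ R} (hf0 : constantCoeff f = 0)
    (hg0 : constantCoeff g = 0) (hf : CoeffNonneg f) (hg : CoeffNonneg g)
    (hh : (1 - (f + g)) * h = 1) : CoeffNonneg ((1 - f) * h) := by
  have hNh : CoeffNonneg h := of_one_sub_mul_eq_one (by simp [hf0, hg0]) (hf.add hg) hh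
  have : (1 - f) * h = 1 + g * h := by linear_combination hh
  rw [this]
  exact one.add (hg.mul hNh)

end CoeffNonneg

theorem exists_mul_eq_one_and_coeffNonneg {f g : MvPowerSeries σ R}
    (hf0 : constantCoeff f = 0) (hg0 : constantCoeff g = 0)
    (hf : CoeffNonneg f) (hg : CoeffNonneg g) :
    ∃ h, (1 - (f + g)) * h = 1 ∧ CoeffNonneg ((1 - f) * h) := by
  have hh := mul_invOfUnit (1 - (f + g)) 1 (by simp [hf0, hg0])
  exact ⟨_, hh, CoeffNonneg.one_sub_mul hf0 hg0 hf hg hh⟩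

end MvPowerSeries

open MvPowerSeries

/-- positivity of the Thom series `Tp₃`, i.e. the positivity conjecture for
Morin singularities in the case `k = 3`.  In `ℤ[[a,b]]`, the series
`(1 − 2a)(1 − 2ab)(1 − b − ab)` (of constant term `1`) is invertible, and for any inverse `h`
every coefficient of `(1 − a)(1 − ab)(1 − b) · h` is nonnegative.  Via `a = z₁/z₂`,
`b = z₂/z₃` this says that all coefficients of the Laurent expansion of
`Tp₃ = (z₁−z₂)(z₁−z₃)(z₂−z₃)/((2z₁−z₂)(z₁+z₂−z₃)(2z₁−z₃))` in the domain
`|z₁| ≪ |z₂| ≪ |z₃|` are nonnegative. -/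
theorem statement10 (a b : MvPowerSeries (Fin 2) ℤ)
    (ha : a = MvPowerSeries.X 0) (hb : b = MvPowerSeries.X 1) :
    IsUnit ((1 - 2 * a) * (1 - 2 * (a * b)) * (1 - b - a * b)) ∧
      ∀ h : MvPowerSeries (Fin 2) ℤ,
        (1 - 2 * a) * (1 - 2 * (a * b)) * (1 - b - a * b) * h = 1 →
          ∀ d : Fin 2 →₀ ℕ,
            0 ≤ MvPowerSeries.coeff d ((1 - a) * (1 - a * b) * (1 - b) * h) := by
  have hNa : CoeffNonneg a := ha ▸ CoeffNonneg.X 0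
  have hNb : CoeffNonneg b := hb ▸ CoeffNonneg.X 1
  have hca : constantCoeff a = 0 := by simp [ha]
  have hcb : constantCoeff b = 0 := by simp [hb]
  have hcab : constantCoeff (a * b) = 0 := by simp [hca]
  obtain ⟨h₁, hh₁, hN₁⟩ := exists_mul_eq_one_and_coeffNonneg hca hca hNa hNa
  obtain ⟨h₂, hh₂, hN₂⟩ := exists_mul_eq_one_and_coeffNonneg hcab hcab (hNa.mul hNb) (hNa.mul hNb)
  obtain ⟨h₃, hh₃, hN₃⟩ := exists_mul_eq_one_and_coeffNonneg hcb hcab hNb (hNa.mul hNb)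
  have hinv : (1 - 2 * a) * (1 - 2 * (a * b)) * (1 - b - a * b) * (h₁ * h₂ * h₃) = 1 := by
    linear_combination
      ((1 - (a * b + a * b)) * h₂ * (1 - (b + a * b)) * h₃) * hh₁ + ((1 - (b + a * b)) * h₃) * hh₂
        + hh₃
  refine ⟨IsUnit.of_mul_eq_one _ hinv, fun h hh => ?_⟩
  have h_eq : h = h₁ * h₂ * h₃ := left_inv_eq_right_inv (by rw [mul_comm, hh]) hinv
  have hsplit : (1 - a) * (1 - a * b) * (1 - b) * h
      = ((1 - a) * h₁) * ((1 - a * b) * h₂) * ((1 - b) * h₃) := by rw [h_eq]; ring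
  rw [hsplit]
  exact (hN₁.mul hN₂).mul hN₃
end
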